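/- arXiv:2510.22086 — 3 statements merged into one kernel-verified Lean document; each statement's English description precedes it below -/
import Mathlib

section
/- Let w > 0 and v(x) = log(x+1). Define for α > 0, κ ∈ [0,1) the unique root x₂(κ,α) ∈ (0, w/2) of (1-κ+α)·log(y+1) = α·log(w-y+1). Then x₂ is strictly increasing in κ: if 0 ≤ κ < κ' < 1, then x₂(κ,α) < x₂(κ',α). -/
open Set Real

/-- The function `g` of the context, whose zero in `(0, w/2)` is the threshold `x₂(κ, α)`. -/
noncomputable def thresholdFn (w α κ y : ℝ) : ℝ :=
  (1 - κ + α) * log (y + 1) - α * log (w - y + 1)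

theorem strictMonoOn_mul_log_add_one_sub_mul_log {a b : ℝ} (c : ℝ) (ha : 0 ≤ a) (hb : 0 < b) :
    StrictMonoOn (fun y => a * log (y + 1) - b * log (c - y + 1)) (Ioo (-1) (c + 1)) := by
  intro y hy z hz hyz
  have hlog_left : log (y + 1) ≤ log (z + 1) := log_le_log (by linarith [hy.1]) (by linarith)
  have hlog_right : log (c - z + 1) < log (c - y + 1) := log_lt_log (by linarith [hz.2]) (by linarith)
  linarith [mul_le_mul_of_nonneg_left hlog_left ha, mul_lt_mul_of_pos_left hlog_right hb]

theorem strictMonoOn_thresholdFn (w : ℝ) {α κ : ℝ} (hα : 0 < α) (hκ : κ < 1) :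
    StrictMonoOn (thresholdFn w α κ) (Ioo (-1) (w + 1)) :=
  strictMonoOn_mul_log_add_one_sub_mul_log w (by linarith) hα

theorem thresholdFn_lt_of_lt (w α : ℝ) {κ κ' y : ℝ} (hκκ' : κ < κ') (hy : 0 < y) :
    thresholdFn w α κ' y < thresholdFn w α κ y := by
  have hlog : 0 < log (y + 1) := log_pos (by linarith)
  have hgap : thresholdFn w α κ y - thresholdFn w α κ' y = (κ' - κ) * log (y + 1) := by
    unfold thresholdFn; ring
  linarith [mul_pos (sub_pos.2 hκκ') hlog]

theorem stmt_8_general (w : ℝ) (α : ℝ) (hα : 0 < α)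
    (κ κ' : ℝ) (hκκ' : κ < κ') (hκ' : κ' < 1)
    (x y : ℝ) (hx : x ∈ Ioo 0 (w / 2)) (hy : y ∈ Ioo 0 (w / 2))
    (hgx : (1 - κ + α) * Real.log (x + 1) = α * Real.log (w - x + 1))
    (hgy : (1 - κ' + α) * Real.log (y + 1) = α * Real.log (w - y + 1)) :
    x < y := by
  obtain ⟨hx0, hxw⟩ := hx
  obtain ⟨hy0, hyw⟩ := hy
  have hg : thresholdFn w α κ' x < thresholdFn w α κ' y :=
    calc thresholdFn w α κ' x < thresholdFn w α κ x := thresholdFn_lt_of_lt w α hκκ' hx0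
      _ = 0 := sub_eq_zero.2 hgx
      _ = thresholdFn w α κ' y := (sub_eq_zero.2 hgy).symm
  exact ((strictMonoOn_thresholdFn w hα hκ').lt_iff_lt ⟨by linarith, by linarith⟩
    ⟨by linarith, by linarith⟩).1 hg

theorem stmt_8 (w : ℝ) (hw : 0 < w) (α : ℝ) (hα : 0 < α)
    (κ κ' : ℝ) (hκ : 0 ≤ κ) (hκκ' : κ < κ') (hκ' : κ' < 1)
    (x y : ℝ) (hx : x ∈ Ioo 0 (w / 2)) (hy : y ∈ Ioo 0 (w / 2))
    (hgx : (1 - κ + α) * Real.log (x + 1) = α * Real.log (w - x + 1))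
    (hgy : (1 - κ' + α) * Real.log (y + 1) = α * Real.log (w - y + 1)) :
    x < y :=
  stmt_8_general w α hα κ κ' hκκ' hκ' x y hx hy hgx hgy
end

section
/- Let w > 0 and v(x) = log(x+1). The root x₂(κ,α) of (1-κ+α)·log(y+1) = α·log(w-y+1) in (0, w/2) is strictly increasing in α > 0 for fixed κ ∈ [0,1): if 0 < α < α', then x₂(κ,α) < x₂(κ,α'). -/
/-!
Dividing the defining equation by `α · log (y + 1)` shows that `x₂(κ, α)` is the point where
`log (w - y + 1) / log (y + 1)` equals `1 + (1 - κ) / α`. The left side is strictly decreasing in `y`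
on `(0, w)` and the right side strictly decreasing in `α`, so the root moves right as `α` grows.
-/

open Set

lemma StrictAntiOn.div_of_antitoneOn {β 𝕜 : Type*} [Preorder β] [Field 𝕜] [LinearOrder 𝕜]
    [IsStrictOrderedRing 𝕜] {f g : β → 𝕜} {s : Set β} (hf : AntitoneOn f s)
    (hf₀ : ∀ x ∈ s, 0 < f x) (hg : StrictMonoOn g s) (hg₀ : ∀ x ∈ s, 0 < g x) :
    StrictAntiOn (fun x ↦ f x / g x) s := fun a ha _ hb hab ↦
  div_lt_div₀' (hf ha hb hab.le) (hg ha hb hab) (hf₀ a ha) (hg₀ a ha)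

lemma strictAntiOn_log_sub_add_one_div_log_add_one (w : ℝ) :
    StrictAntiOn (fun y ↦ Real.log (w - y + 1) / Real.log (y + 1)) (Ioo 0 w) := by
  refine StrictAntiOn.div_of_antitoneOn ?_ ?_ ?_ ?_
  · intro a ha b hb hab
    exact Real.log_le_log (by linarith [hb.2]) (by linarith)
  · exact fun y hy ↦ Real.log_pos (by linarith [hy.2])
  · intro a ha b hb hab
    exact Real.log_lt_log (by linarith [ha.1]) (by linarith)
  · exact fun y hy ↦ Real.log_pos (by linarith [hy.1])

lemma log_sub_add_one_div_log_add_one_eq {w κ α y : ℝ} (hα : 0 < α) (hy : 0 < y)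
    (hgy : (1 - κ + α) * Real.log (y + 1) = α * Real.log (w - y + 1)) :
    Real.log (w - y + 1) / Real.log (y + 1) = 1 + (1 - κ) / α := by
  have hL : 0 < Real.log (y + 1) := Real.log_pos (by linarith)
  field_simp
  linarith

theorem stmt_9_general (w : ℝ) (κ : ℝ) (hκ : κ ∈ Ico (0 : ℝ) 1)
    (α α' : ℝ) (hα : 0 < α) (hαα' : α < α')
    (x y : ℝ) (hx : x ∈ Ioo 0 (w / 2)) (hy : y ∈ Ioo 0 (w / 2))
    (hgx : (1 - κ + α) * Real.log (x + 1) = α * Real.log (w - x + 1))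
    (hgy : (1 - κ + α') * Real.log (y + 1) = α' * Real.log (w - y + 1)) :
    x < y := by
  have hx' : x ∈ Ioo 0 w := ⟨hx.1, by linarith [hx.1, hx.2]⟩
  have hy' : y ∈ Ioo 0 w := ⟨hy.1, by linarith [hy.1, hy.2]⟩
  have hratio : 1 + (1 - κ) / α' < 1 + (1 - κ) / α :=
    add_lt_add_right (div_lt_div_of_pos_left (sub_pos.mpr hκ.2) hα hαα') 1
  rw [← log_sub_add_one_div_log_add_one_eq hα hx.1 hgx,
    ← log_sub_add_one_div_log_add_one_eq (hα.trans hαα') hy.1 hgy] at hratio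
  exact (strictAntiOn_log_sub_add_one_div_log_add_one w).lt_iff_gt hy' hx' |>.mp hratio

theorem stmt_9 (w : ℝ) (hw : 0 < w) (κ : ℝ) (hκ : κ ∈ Ico (0 : ℝ) 1)
    (α α' : ℝ) (hα : 0 < α) (hαα' : α < α')
    (x y : ℝ) (hx : x ∈ Ioo 0 (w / 2)) (hy : y ∈ Ioo 0 (w / 2))
    (hgx : (1 - κ + α) * Real.log (x + 1) = α * Real.log (w - x + 1))
    (hgy : (1 - κ + α') * Real.log (y + 1) = α' * Real.log (w - y + 1)) :
    x < y :=
  stmt_9_general w κ hκ α α' hα hαα' x y hx hy hgx hgy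
end

section
/- Let w > 0, α ≥ 0, κ ∈ [0,1), and v increasing, strictly concave, differentiable with v(0)=0. The function κ ↦ U_asym(κ) := c₁·(1-κ) + ∫_{x₂(κ)}^{w/2} [(1-κ+α)v(y) - α·v(w-y)] dF(y) is strictly decreasing in κ, where c₁ = v(w-x_s)·F₂(x_s) > 0 is a positive constant, x₂(κ) is the constrained optimal rejection threshold, and F is an absolutely continuous CDF on [0, w/2]. Specifically, by the envelope theorem its derivative equals −c₁ − ∫_{x₂(κ)}^{w/2} v(y) dF(y) < 0. -/
/-! Writing the integrand as `g - κ h` with `h = v f ≥ 0` on `(0, w/2]`, raising `κ` from `κ₁` to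
`κ₂` lowers the objective at every threshold `t` by at least `c₁ (κ₂ - κ₁)`. A uniform drop lowers
the supremum by the same amount, which is the envelope argument without derivatives. The only
analytic input is that the supremum at `κ₁` is finite: `t ↦ ∫_t^{w/2} (g - κ₁ h)` is continuous on
the compact interval `[0, w/2]`. -/

open Set MeasureTheory

theorem Real.sSup_image_le_sub_of_forall_le_sub {ι : Type*} {s : Set ι} {F G : ι → ℝ} {δ : ℝ}
    (hs : s.Nonempty) (hG : BddAbove (G '' s)) (h : ∀ t ∈ s, F t ≤ G t - δ) :
    sSup (F '' s) ≤ sSup (G '' s) - δ :=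
  csSup_le (hs.image F) <| forall_mem_image.2 fun t ht ↦
    (h t ht).trans (sub_le_sub_right (le_csSup hG (mem_image_of_mem G ht)) δ)

theorem intervalIntegral.bddAbove_image_integral_left {g : ℝ → ℝ} {a b : ℝ}
    (hab : a ≤ b) (hg : IntegrableOn g (Icc a b)) :
    BddAbove ((fun t ↦ ∫ x in t..b, g x) '' Icc a b) := by
  rw [← uIcc_of_le hab] at hg ⊢
  exact isCompact_uIcc.bddAbove_image (continuousOn_primitive_interval_left hg)

theorem strictAnti_sSup_image_integral_sub_mul {g h : ℝ → ℝ} {a b c : ℝ} (hab : a ≤ b)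
    (hc : 0 < c) (hg : IntegrableOn g (Icc a b)) (hh : IntegrableOn h (Icc a b))
    (hh_nonneg : ∀ x ∈ Ioc a b, 0 ≤ h x) :
    StrictAnti fun κ : ℝ ↦
      sSup ((fun t ↦ c * (1 - κ) + ∫ x in t..b, (g x - κ * h x)) '' Icc a b) := by
  intro κ₁ κ₂ hlt
  have hint : ∀ {u : ℝ → ℝ}, IntegrableOn u (Icc a b) → ∀ t ∈ Icc a b,
      IntervalIntegrable u volume t b := fun hu t ht ↦
    (intervalIntegrable_iff_integrableOn_Icc_of_le ht.2).2 (hu.mono_set (Icc_subset_Icc_left ht.1))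
  have hsplit : ∀ κ, ∀ t ∈ Icc a b,
      ∫ x in t..b, (g x - κ * h x) = (∫ x in t..b, g x) - κ * ∫ x in t..b, h x := fun κ t ht ↦ by
    rw [intervalIntegral.integral_sub (hint hg t ht) ((hint hh t ht).const_mul κ),
      intervalIntegral.integral_const_mul]
  have hh_int_nonneg : ∀ t ∈ Icc a b, 0 ≤ ∫ x in t..b, h x := fun t ht ↦ by
    rw [intervalIntegral.integral_of_le ht.2]
    exact setIntegral_nonneg measurableSet_Ioc
      fun x hx ↦ hh_nonneg x ⟨ht.1.trans_lt hx.1, hx.2⟩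
  have hbdd : BddAbove ((fun t ↦ c * (1 - κ₁) + ∫ x in t..b, (g x - κ₁ * h x)) '' Icc a b) := by
    obtain ⟨M, hM⟩ := intervalIntegral.bddAbove_image_integral_left hab (hg.sub (hh.const_mul κ₁))
    exact ⟨c * (1 - κ₁) + M, forall_mem_image.2 fun t ht ↦
      add_le_add_right (hM (mem_image_of_mem _ ht)) _⟩
  calc _ ≤ sSup ((fun t ↦ c * (1 - κ₁) + ∫ x in t..b, (g x - κ₁ * h x)) '' Icc a b)
          - c * (κ₂ - κ₁) := by
        refine Real.sSup_image_le_sub_of_forall_le_sub (nonempty_Icc.2 hab) hbdd fun t ht ↦ ?_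
        simp only [hsplit _ t ht]
        linarith [mul_nonneg (sub_nonneg.2 hlt.le) (hh_int_nonneg t ht)]
    _ < _ := sub_lt_self _ (mul_pos hc (sub_pos.2 hlt))

theorem stmt_18_general (w : ℝ) (hw : 0 < w) (α : ℝ)
    (v : ℝ → ℝ)
    (hdiff : DifferentiableOn ℝ v (Icc 0 w))
    (hvpos : ∀ y ∈ Ioc (0 : ℝ) (w / 2), 0 < v y)
    (c₁ : ℝ) (hc₁ : 0 < c₁)
    (f : ℝ → ℝ) (hf_cont : Continuous f) (hf_nonneg : ∀ y, 0 ≤ f y)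
    (φ : ℝ → ℝ)
    (hφ : ∀ κ ∈ Ico (0 : ℝ) 1,
      φ κ = sSup {u : ℝ | ∃ t ∈ Icc (0 : ℝ) (w / 2),
        u = c₁ * (1 - κ) +
          ∫ y in t..(w / 2), ((1 - κ + α) * v y - α * v (w - y)) * f y}) :
    StrictAntiOn φ (Ico (0 : ℝ) 1) := by
  have hv : ContinuousOn v (Icc 0 (w / 2)) :=
    hdiff.continuousOn.mono (Icc_subset_Icc_right (by linarith))
  have hvw : ContinuousOn (fun y ↦ v (w - y)) (Icc 0 (w / 2)) :=
    hdiff.continuousOn.comp (by fun_prop) fun y hy ↦ ⟨by linarith [hy.2], by linarith [hy.1]⟩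
  have hanti := strictAnti_sSup_image_integral_sub_mul (by linarith) hc₁
    (g := fun y ↦ ((1 + α) * v y - α * v (w - y)) * f y) (h := fun y ↦ v y * f y)
    ((((hv.const_mul _).sub (hvw.const_mul _)).mul hf_cont.continuousOn).integrableOn_Icc)
    ((hv.mul hf_cont.continuousOn).integrableOn_Icc)
    fun y hy ↦ mul_nonneg (hvpos y hy).le (hf_nonneg y)
  intro κ₁ h₁ κ₂ h₂ hlt
  convert hanti hlt using 1 <;>
  · rw [hφ _ ‹_›]
    congr 1
    ext u
    simp only [mem_ofPred_eq, mem_image, eq_comm (a := u)]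
    refine exists_congr fun t ↦ and_congr_right fun _ ↦ ?_
    congr! 4 with y
    ring

theorem stmt_18 (w : ℝ) (hw : 0 < w) (α : ℝ) (hα : 0 ≤ α)
    (v : ℝ → ℝ)
    (hmono : StrictMonoOn v (Icc 0 w))
    (hconc : StrictConcaveOn ℝ (Icc 0 w) v)
    (hdiff : DifferentiableOn ℝ v (Icc 0 w))
    (hv0 : v 0 = 0)
    (hvpos : ∀ y ∈ Ioc (0 : ℝ) (w / 2), 0 < v y)
    (c₁ : ℝ) (hc₁ : 0 < c₁)
    (f : ℝ → ℝ) (hf_cont : Continuous f) (hf_nonneg : ∀ y, 0 ≤ f y)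
    (hf_supp : ∀ y, y ∉ Icc (0 : ℝ) (w / 2) → f y = 0)
    (hf_pos : ∀ y ∈ Ioo (0 : ℝ) (w / 2), 0 < f y)
    (φ : ℝ → ℝ)
    (hφ : ∀ κ ∈ Ico (0 : ℝ) 1,
      φ κ = sSup {u : ℝ | ∃ t ∈ Icc (0 : ℝ) (w / 2),
        u = c₁ * (1 - κ) +
          ∫ y in t..(w / 2), ((1 - κ + α) * v y - α * v (w - y)) * f y}) :
    StrictAntiOn φ (Ico (0 : ℝ) 1) :=
  stmt_18_general w hw α v hdiff hvpos c₁ hc₁ f hf_cont hf_nonneg φ hφ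
end
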